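/- arXiv:2105.10169 — 5 statements merged into one kernel-verified Lean document; each statement's English description precedes it below -/
import Mathlib

section
/- Let d ≥ 1 and Ω = (0,1)^d. There exists a constant M₀ > 0 such that for every measurable set E ⊆ Ω and every measurable function θ : Ω → ℝ with 0 ≤ θ(x) ≤ 2 for almost every x ∈ Ω, setting m = 𝟙_E (the indicator function of E), one has ∫_Ω |θ − m| ≤ M₀ · ( ∫_Ω (θ/3 + m/6)(θ − m)² )^{1/3}. -/
open MeasureTheory

/-- Step 2 in the proof of Lemma 3 (Le:L1): on `Ω = (0,1)^d`, for bang-bang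
`m = 𝟙_E` and `0 ≤ θ ≤ 2` a.e., the `L¹` distance is controlled by the cube
root of `∫ (θ/3 + m/6)(θ-m)²`. -/

theorem step2_cube_root_bound (d : ℕ) (hd : 1 ≤ d) :
    ∃ M₀ > (0:ℝ),
      ∀ (E : Set (Fin d → ℝ)) (θ : (Fin d → ℝ) → ℝ),
        MeasurableSet E →
        E ⊆ Set.pi Set.univ (fun _ : Fin d => Set.Ioo (0:ℝ) 1) →
        Measurable θ →
        (∀ᵐ x ∂(volume.restrict (Set.pi Set.univ (fun _ : Fin d => Set.Ioo (0:ℝ) 1))),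
          0 ≤ θ x ∧ θ x ≤ 2) →
        (∫ x in Set.pi Set.univ (fun _ : Fin d => Set.Ioo (0:ℝ) 1),
            |θ x - E.indicator (fun _ => (1:ℝ)) x|) ≤
          M₀ * (∫ x in Set.pi Set.univ (fun _ : Fin d => Set.Ioo (0:ℝ) 1),
            (θ x / 3 + E.indicator (fun _ => (1:ℝ)) x / 6)
              * (θ x - E.indicator (fun _ => (1:ℝ)) x) ^ 2) ^ ((1:ℝ)/3) := by
  refine ⟨2, by norm_num, ?_⟩
  intro E θ hE hEΩ hθ hbd
  set Ω : Set (Fin d → ℝ) := Set.pi Set.univ (fun _ : Fin d => Set.Ioo (0:ℝ) 1) with hΩ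
  set μ := volume.restrict Ω with hμ
  set m : (Fin d → ℝ) → ℝ := E.indicator (fun _ => (1:ℝ)) with hm
  have hμuniv : μ Set.univ = 1 := by
    rw [hμ, Measure.restrict_apply MeasurableSet.univ, Set.univ_inter, hΩ, volume_pi_pi]
    simp [Real.volume_Ioo]
  have hmmeas : Measurable m := measurable_const.indicator hE
  set f : (Fin d → ℝ) → ℝ := fun x => |θ x - m x| with hf
  set g : (Fin d → ℝ) → ℝ := fun x => (θ x / 3 + m x / 6) * (θ x - m x) ^ 2 with hg
  have hfmeas : Measurable f := (hθ.sub hmmeas).abs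
  have hgmeas : Measurable g :=
    ((hθ.div_const 3).add (hmmeas.div_const 6)).mul ((hθ.sub hmmeas).pow_const 2)
  have hkey : ∀ᵐ x ∂μ, (0 ≤ g x ∧ g x ≤ 4) ∧ f x ^ 3 ≤ 6 * g x ∧ f x ≤ 2 := by
    filter_upwards [hbd] with x ⟨h0, h2⟩
    have hfx : f x = |θ x - m x| := rfl
    have hgx : g x = (θ x / 3 + m x / 6) * (θ x - m x) ^ 2 := rfl
    have hmx : m x = 0 ∨ m x = 1 := by
      by_cases hx : x ∈ E <;> simp [hm, Set.indicator_apply, hx]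
    have hcube : f x ^ 3 = (θ x - m x) ^ 2 * f x := by
      rw [hfx, pow_succ, sq_abs]
    rcases hmx with h | h
    · have habs : f x = θ x := by rw [hfx, h]; simp [abs_of_nonneg h0]
      refine ⟨⟨?_, ?_⟩, ?_, ?_⟩
      · rw [hgx, h]; positivity
      · rw [hgx, h]; nlinarith [sq_nonneg (θ x)]
      · rw [hcube, habs, hgx, h]; nlinarith [sq_nonneg (θ x)]
      · rw [habs]; exact h2
    · have habs : f x ≤ 1 := by
        rw [hfx, h, abs_le]; constructor <;> linarith
      have hfx0 : 0 ≤ f x := abs_nonneg _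
      refine ⟨⟨?_, ?_⟩, ?_, by linarith⟩
      · rw [hgx, h]; nlinarith [sq_nonneg (θ x - 1)]
      · rw [hgx, h]
        have : (θ x - 1)^2 ≤ 1 := by nlinarith
        nlinarith
      · rw [hcube, hgx, h]
        nlinarith [sq_nonneg (θ x - 1),
          mul_le_mul_of_nonneg_left habs (sq_nonneg (θ x - 1))]
  have hg0 : ∀ᵐ x ∂μ, 0 ≤ g x := hkey.mono fun x h => h.1.1
  have hf0 : ∀ᵐ x ∂μ, 0 ≤ f x := Filter.Eventually.of_forall fun x => abs_nonneg _
  -- lintegral versions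
  set F : (Fin d → ℝ) → ENNReal := fun x => ENNReal.ofReal (f x) with hF
  set G : (Fin d → ℝ) → ENNReal := fun x => ENNReal.ofReal (g x) with hG
  have hIf : ∫ x, f x ∂μ = (∫⁻ x, F x ∂μ).toReal :=
    integral_eq_lintegral_of_nonneg_ae hf0 hfmeas.aestronglyMeasurable
  have hIg : ∫ x, g x ∂μ = (∫⁻ x, G x ∂μ).toReal :=
    integral_eq_lintegral_of_nonneg_ae hg0 hgmeas.aestronglyMeasurable
  -- G is bounded by 4 a.e., so its lintegral is finite
  have hGtop : ∫⁻ x, G x ∂μ ≠ ⊤ := by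
    have hb : ∀ᵐ x ∂μ, G x ≤ 4 := by
      filter_upwards [hkey] with x ⟨⟨h1, h4⟩, h2, h3⟩
      calc G x ≤ ENNReal.ofReal 4 := ENNReal.ofReal_le_ofReal h4
        _ = 4 := by norm_num
    have := lintegral_mono_ae hb
    rw [lintegral_const, hμuniv, mul_one] at this
    exact ne_top_of_le_ne_top (by norm_num) this
  -- Hölder: ∫⁻ F ≤ (∫⁻ F^3)^(1/3)
  have hHolder : ∫⁻ x, F x ∂μ ≤ (∫⁻ x, F x ^ (3:ℝ) ∂μ) ^ ((1:ℝ)/3) := by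
    have hconj : Real.HolderConjugate 3 (3/2) := by
      constructor <;> norm_num
    have := ENNReal.lintegral_mul_le_Lp_mul_Lq μ hconj
      (hfmeas.ennreal_ofReal.aemeasurable) (aemeasurable_const (b := (1:ENNReal)))
    simpa [hμuniv, ENNReal.one_rpow, lintegral_const] using this
  -- pointwise: F^3 ≤ 6 * G
  have hFG : ∫⁻ x, F x ^ (3:ℝ) ∂μ ≤ 6 * ∫⁻ x, G x ∂μ := by
    rw [← lintegral_const_mul 6 (hgmeas.ennreal_ofReal)]
    refine lintegral_mono_ae ?_
    filter_upwards [hkey] with x ⟨⟨h1, h4⟩, h2, h3⟩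
    have hfx0 : 0 ≤ f x := abs_nonneg _
    have hFx : F x = ENNReal.ofReal (f x) := rfl
    have hGx : G x = ENNReal.ofReal (g x) := rfl
    calc F x ^ (3:ℝ) = ENNReal.ofReal (f x ^ 3) := by
          rw [hFx, ENNReal.ofReal_rpow_of_nonneg hfx0 (by norm_num : (0:ℝ) ≤ 3),
            show ((3:ℝ)) = ((3:ℕ):ℝ) from by norm_num, Real.rpow_natCast]
      _ ≤ ENNReal.ofReal (6 * g x) := ENNReal.ofReal_le_ofReal h2
      _ = 6 * G x := by
          rw [hGx, ENNReal.ofReal_mul (by norm_num : (0:ℝ) ≤ 6)]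
          norm_num
  -- combine in ENNReal
  have hmain : ∫⁻ x, F x ∂μ ≤ 2 * (∫⁻ x, G x ∂μ) ^ ((1:ℝ)/3) := by
    calc ∫⁻ x, F x ∂μ ≤ (∫⁻ x, F x ^ (3:ℝ) ∂μ) ^ ((1:ℝ)/3) := hHolder
      _ ≤ (6 * ∫⁻ x, G x ∂μ) ^ ((1:ℝ)/3) :=
          ENNReal.rpow_le_rpow hFG (by norm_num)
      _ = (6:ENNReal) ^ ((1:ℝ)/3) * (∫⁻ x, G x ∂μ) ^ ((1:ℝ)/3) := by
          rw [ENNReal.mul_rpow_of_nonneg _ _ (by norm_num)]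
      _ ≤ 2 * (∫⁻ x, G x ∂μ) ^ ((1:ℝ)/3) := by
          gcongr
          have : ((6:ENNReal)) ^ ((1:ℝ)/3) ≤ ((8:ENNReal)) ^ ((1:ℝ)/3) :=
            ENNReal.rpow_le_rpow (by norm_num) (by norm_num)
          refine this.trans_eq ?_
          have h8 : ((8:ENNReal)) = (2:ENNReal) ^ (3:ℝ) := by
            rw [show (3:ℝ) = ((3:ℕ):ℝ) by norm_num, ENNReal.rpow_natCast]; norm_num
          rw [h8, ← ENNReal.rpow_mul]
          norm_num
  -- back to real
  rw [hIf, hIg]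
  have hRHS : (2 * (∫⁻ x, G x ∂μ) ^ ((1:ℝ)/3)).toReal
      = 2 * ((∫⁻ x, G x ∂μ).toReal) ^ ((1:ℝ)/3) := by
    rw [ENNReal.toReal_mul, ENNReal.toReal_rpow]
    norm_num
  calc (∫⁻ x, F x ∂μ).toReal ≤ (2 * (∫⁻ x, G x ∂μ) ^ ((1:ℝ)/3)).toReal := by
        refine ENNReal.toReal_mono ?_ hmain
        refine ENNReal.mul_ne_top (by norm_num) ?_
        exact ENNReal.rpow_ne_top_of_nonneg (by norm_num) hGtop
    _ = 2 * ((∫⁻ x, G x ∂μ).toReal) ^ ((1:ℝ)/3) := hRHS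
end

section
/- There exists a constant M₁ > 0 such that for every μ > 0, every measurable set E ⊆ (0,1), and every continuously differentiable function θ : [0,1] → ℝ with 0 ≤ θ(x) ≤ 2 for all x, setting m = 𝟙_E, one has ∫₀¹ |θ − m| ≤ M₁ · ( (μ/2)∫₀¹ θ′² − (1/2)∫₀¹ m θ² + (1/3)∫₀¹ θ³ + (1/6)∫₀¹ m³ )^{1/3}. In particular the quantity inside the cube root is nonnegative. -/
/-!
For `θ, m ≥ 0` one has `2θ³ - 3mθ² + m³ = (θ - m)² (2θ + m) ≥ |θ - m|³`, so integrating and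
dropping the nonnegative Dirichlet term gives `∫ |θ - m|³ ≤ 6 Ẽ_{m,μ}(θ)`. Jensen's inequality
on the probability space `(0,1)` then gives
`∫ |θ - m| ≤ (∫ |θ - m|³)^{1/3} ≤ 6^{1/3} Ẽ_{m,μ}(θ)^{1/3}`.
-/

open MeasureTheory Set

noncomputable def shiftedEnergy (μ : ℝ) (m θ : ℝ → ℝ) : ℝ :=
  μ / 2 * (∫ x in (0:ℝ)..1, (deriv θ x) ^ 2)
    - (1/2) * (∫ x in (0:ℝ)..1, m x * θ x ^ 2)
    + (1/3) * (∫ x in (0:ℝ)..1, θ x ^ 3)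
    + (1/6) * (∫ x in (0:ℝ)..1, m x ^ 3)

lemma abs_sub_pow_three_le {s t : ℝ} (hs : 0 ≤ s) (ht : 0 ≤ t) :
    |t - s| ^ 3 ≤ -3 * (s * t ^ 2) + 2 * t ^ 3 + s ^ 3 := by
  have hdist : |t - s| ≤ 2 * t + s := by
    rw [abs_le]; constructor <;> linarith
  calc |t - s| ^ 3 = (t - s) ^ 2 * |t - s| := by rw [← sq_abs (t - s)]; ring
    _ ≤ (t - s) ^ 2 * (2 * t + s) := by gcongr
    _ = -3 * (s * t ^ 2) + 2 * t ^ 3 + s ^ 3 := by ring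

lemma integral_le_integral_pow_rpow_inv {α : Type*} [MeasurableSpace α] {ν : Measure α}
    [IsProbabilityMeasure ν] {f : α → ℝ} {n : ℕ} (hn : n ≠ 0) (hf₀ : ∀ᵐ x ∂ν, 0 ≤ f x)
    (hf : Integrable f ν) (hfn : Integrable (fun x => f x ^ n) ν) :
    ∫ x, f x ∂ν ≤ (∫ x, f x ^ n ∂ν) ^ (n⁻¹ : ℝ) := by
  have jensen : (∫ x, f x ∂ν) ^ n ≤ ∫ x, f x ^ n ∂ν :=
    (convexOn_pow n).map_integral_le (continuous_pow n).continuousOn isClosed_Ici hf₀ hf hfn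
  have hnonneg : 0 ≤ ∫ x, f x ∂ν := integral_nonneg_of_ae hf₀
  calc ∫ x, f x ∂ν = ((∫ x, f x ∂ν) ^ n) ^ (n⁻¹ : ℝ) :=
        (Real.pow_rpow_inv_natCast hnonneg hn).symm
    _ ≤ (∫ x, f x ^ n ∂ν) ^ (n⁻¹ : ℝ) :=
        Real.rpow_le_rpow (pow_nonneg hnonneg n) jensen (by positivity)

instance isProbabilityMeasure_restrict_Ioc_zero_one :
    IsProbabilityMeasure (volume.restrict (Ioc (0:ℝ) 1)) :=
  ⟨by simp⟩

lemma intervalIntegral_le_integral_pow_rpow_inv {f : ℝ → ℝ} {n : ℕ} (hn : n ≠ 0)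
    (hf₀ : ∀ x ∈ Ioc (0:ℝ) 1, 0 ≤ f x) (hf : IntervalIntegrable f volume 0 1)
    (hfn : IntervalIntegrable (fun x => f x ^ n) volume 0 1) :
    ∫ x in (0:ℝ)..1, f x ≤ (∫ x in (0:ℝ)..1, f x ^ n) ^ (n⁻¹ : ℝ) := by
  rw [intervalIntegral.integral_of_le zero_le_one, intervalIntegral.integral_of_le zero_le_one]
  exact integral_le_integral_pow_rpow_inv hn (ae_restrict_of_forall_mem measurableSet_Ioc hf₀)
    hf.1 hfn.1

section Energy

variable {μ : ℝ} {m θ : ℝ → ℝ}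

lemma intervalIntegrable_comp_of_mem_Icc {F : ℝ → ℝ → ℝ} (hF : Continuous (Function.uncurry F))
    (hm : Measurable m) (hm01 : ∀ x, m x ∈ Icc (0:ℝ) 1) (hθ : Continuous θ) {a b : ℝ} :
    IntervalIntegrable (fun x => F (m x) (θ x)) volume a b := by
  obtain ⟨C, hC⟩ :=
    (isCompact_Icc.prod (isCompact_uIcc.image hθ)).exists_bound_of_continuousOn hF.continuousOn
  rw [intervalIntegrable_iff]
  refine Measure.integrableOn_of_bounded (M := C) measure_Ioc_lt_top.ne
    (hF.measurable.comp (hm.prodMk hθ.measurable)).aestronglyMeasurable ?_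
  filter_upwards [ae_restrict_mem measurableSet_uIoc] with x hx
  exact hC (m x, θ x) ⟨hm01 x, mem_image_of_mem θ (uIoc_subset_uIcc hx)⟩

lemma integral_abs_sub_pow_three_le_shiftedEnergy (hμ : 0 ≤ μ) (hm : Measurable m)
    (hm01 : ∀ x, m x ∈ Icc (0:ℝ) 1) (hθ : Continuous θ) (hθ₀ : ∀ x ∈ Icc (0:ℝ) 1, 0 ≤ θ x) :
    ∫ x in (0:ℝ)..1, |θ x - m x| ^ 3 ≤ 6 * shiftedEnergy μ m θ := by
  have integrable (F : ℝ → ℝ → ℝ) (hF : Continuous (Function.uncurry F)) :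
      IntervalIntegrable (fun x => F (m x) (θ x)) volume 0 1 :=
    intervalIntegrable_comp_of_mem_Icc hF hm hm01 hθ
  have hmθ := integrable (fun s t => s * t ^ 2) (by fun_prop)
  have hθ3 := integrable (fun _ t => t ^ 3) (by fun_prop)
  have hm3 := integrable (fun s _ => s ^ 3) (by fun_prop)
  have hpointwise := intervalIntegral.integral_mono_on zero_le_one
    (integrable (fun s t => |t - s| ^ 3) (by fun_prop))
    (((hmθ.const_mul (-3)).add (hθ3.const_mul 2)).add hm3)
    (fun x hx => abs_sub_pow_three_le (hm01 x).1 (hθ₀ x hx))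
  rw [intervalIntegral.integral_add ((hmθ.const_mul (-3)).add (hθ3.const_mul 2)) hm3,
    intervalIntegral.integral_add (hmθ.const_mul (-3)) (hθ3.const_mul 2),
    intervalIntegral.integral_const_mul, intervalIntegral.integral_const_mul] at hpointwise
  have hgradient : 0 ≤ μ / 2 * ∫ x in (0:ℝ)..1, (deriv θ x) ^ 2 :=
    mul_nonneg (by positivity) (intervalIntegral.integral_nonneg zero_le_one fun x _ => sq_nonneg _)
  unfold shiftedEnergy
  linarith

lemma shiftedEnergy_nonneg (hμ : 0 ≤ μ) (hm : Measurable m) (hm01 : ∀ x, m x ∈ Icc (0:ℝ) 1)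
    (hθ : Continuous θ) (hθ₀ : ∀ x ∈ Icc (0:ℝ) 1, 0 ≤ θ x) : 0 ≤ shiftedEnergy μ m θ := by
  have hbound := integral_abs_sub_pow_three_le_shiftedEnergy hμ hm hm01 hθ hθ₀
  have hcube_nonneg : 0 ≤ ∫ x in (0:ℝ)..1, |θ x - m x| ^ 3 :=
    intervalIntegral.integral_nonneg zero_le_one fun x _ => by positivity
  linarith

end Energy

/-- One-dimensional, classical-regularity version of Lemma 3 (Le:L1): for
bang-bang `m = 𝟙_E` on `(0,1)`, the `L¹` distance from `θ` to `m` is bounded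
by a universal constant times the cube root of the shifted energy
`Ẽ_{m,μ}(θ)`, which is in particular nonnegative. -/
theorem L1_cube_root_energy_bound_1D :
    ∃ M₁ > (0:ℝ),
      ∀ (μ : ℝ), 0 < μ →
      ∀ (E : Set ℝ), MeasurableSet E → E ⊆ Set.Ioo (0:ℝ) 1 →
      ∀ (θ : ℝ → ℝ), ContDiff ℝ 1 θ →
        (∀ x ∈ Set.Icc (0:ℝ) 1, 0 ≤ θ x ∧ θ x ≤ 2) →
        (0 ≤ μ / 2 * (∫ x in (0:ℝ)..1, (deriv θ x) ^ 2)
            - (1/2) * (∫ x in (0:ℝ)..1, E.indicator (fun _ => (1:ℝ)) x * θ x ^ 2)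
            + (1/3) * (∫ x in (0:ℝ)..1, θ x ^ 3)
            + (1/6) * (∫ x in (0:ℝ)..1, E.indicator (fun _ => (1:ℝ)) x ^ 3)) ∧
        (∫ x in (0:ℝ)..1, |θ x - E.indicator (fun _ => (1:ℝ)) x|) ≤
          M₁ * (μ / 2 * (∫ x in (0:ℝ)..1, (deriv θ x) ^ 2)
            - (1/2) * (∫ x in (0:ℝ)..1, E.indicator (fun _ => (1:ℝ)) x * θ x ^ 2)
            + (1/3) * (∫ x in (0:ℝ)..1, θ x ^ 3)
            + (1/6) * (∫ x in (0:ℝ)..1, E.indicator (fun _ => (1:ℝ)) x ^ 3)) ^ ((1:ℝ)/3) := by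
  refine ⟨6 ^ ((1:ℝ) / 3), by positivity, fun μ hμ E hE _ θ hθ hθ₀₂ => ?_⟩
  set m := E.indicator fun _ => (1:ℝ)
  have hm : Measurable m := measurable_const.indicator hE
  have hm01 (x : ℝ) : m x ∈ Icc (0:ℝ) 1 := by by_cases hx : x ∈ E <;> simp [m, hx]
  have hθ₀ (x : ℝ) (hx : x ∈ Icc (0:ℝ) 1) : 0 ≤ θ x := (hθ₀₂ x hx).1
  have hθc := hθ.continuous
  have henergy := integral_abs_sub_pow_three_le_shiftedEnergy hμ.le hm hm01 hθc hθ₀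
  have hnonneg := shiftedEnergy_nonneg hμ.le hm hm01 hθc hθ₀
  refine ⟨hnonneg, ?_⟩
  calc ∫ x in (0:ℝ)..1, |θ x - m x|
      ≤ (∫ x in (0:ℝ)..1, |θ x - m x| ^ 3) ^ ((3 : ℕ)⁻¹ : ℝ) :=
        intervalIntegral_le_integral_pow_rpow_inv three_ne_zero (fun x _ => abs_nonneg _)
          (intervalIntegrable_comp_of_mem_Icc (F := fun s t => |t - s|) (by fun_prop) hm hm01 hθc)
          (intervalIntegrable_comp_of_mem_Icc (F := fun s t => |t - s| ^ 3) (by fun_prop) hm hm01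
            hθc)
    _ ≤ (6 * shiftedEnergy μ m θ) ^ ((3 : ℕ)⁻¹ : ℝ) :=
        Real.rpow_le_rpow (intervalIntegral.integral_nonneg zero_le_one fun x _ => by positivity)
          henergy (by positivity)
    _ = 6 ^ ((1:ℝ) / 3) * shiftedEnergy μ m θ ^ ((1:ℝ) / 3) := by
        rw [Real.mul_rpow (by norm_num) hnonneg]; norm_num
end

section
/- Let d ≥ 1 be an integer, let r > 0, and let g : ℝ → ℝ be continuously differentiable with g(0) = 1. For each positive integer k set J_k := ∫₀^r s^{d−1} ( k·g(s)·sin(ks) + g′(s)·cos(ks) )² ds. Then J_k / k² converges to (1/2)∫₀^r s^{d−1} g(s)² ds as k → ∞, this limit is strictly positive, and consequently J_k → +∞ as k → ∞. -/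
/-!
Expanding the square, `J_k / k² = ∫ w g² sin²(ks) + O(1/k)` with weight `w s = s^(d-1)`, since
the cross term and the `g'²` term are bounded integrals carrying the factors `1/k` and `1/k²`.
Writing `sin²(ks) = (1 - cos(2ks))/2`, the Riemann–Lebesgue lemma sends the first integral to
`(1/2) ∫ w g²`. This limit is positive because the integrand is nonnegative and, as `g 0 = 1`,
positive at points of `(0, r]` close to `0`.
-/

open MeasureTheory intervalIntegral Filter Topology Real
open scoped FourierTransform Interval

theorem tendsto_integral_mul_cos_atTop {f : ℝ → ℝ} (hf : Integrable f) :
    Tendsto (fun t : ℝ => ∫ x, f x * cos (t * x)) atTop (𝓝 0) := by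
  -- `𝐞 (-(x * (t / (2π))))` is `exp (-i t x)`, whose real part is `cos (t x)`.
  have hfreq : Tendsto (fun t : ℝ => t / (2 * π)) atTop (cocompact ℝ) :=
    ((tendsto_id.atTop_div_const (by positivity)).mono_right le_sup_right).trans_eq
      cocompact_eq_atBot_atTop.symm
  have hRL := (Complex.continuous_re.tendsto 0).comp
    ((Real.tendsto_integral_exp_smul_cocompact fun x => (f x : ℂ)).comp hfreq)
  rw [Complex.zero_re] at hRL
  refine hRL.congr fun t => ?_
  have hint : Integrable (fun x : ℝ => 𝐞 (-(x * (t / (2 * π)))) • (f x : ℂ)) := by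
    simpa [real_inner_eq_re_inner, mul_comm] using
      (Real.fourierIntegral_convergent_iff (V := ℝ) (t / (2 * π))).2 hf.ofReal
  simp only [Function.comp_apply]
  rw [← RCLike.re_eq_complex_re, ← integral_re hint]
  congr 1 with x
  rw [Circle.smul_def, Real.fourierChar_apply, smul_eq_mul, RCLike.re_eq_complex_re,
    Complex.re_mul_ofReal, Complex.exp_ofReal_mul_I_re]
  rw [show 2 * π * -(x * (t / (2 * π))) = -(t * x) by field_simp, cos_neg, mul_comm]

theorem tendsto_setIntegral_mul_cos_atTop {f : ℝ → ℝ} {s : Set ℝ} (hs : MeasurableSet s)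
    (hf : IntegrableOn f s) :
    Tendsto (fun t : ℝ => ∫ x in s, f x * cos (t * x)) atTop (𝓝 0) := by
  refine (tendsto_integral_mul_cos_atTop (hf.integrable_indicator hs)).congr fun t => ?_
  simp_rw [← MeasureTheory.integral_indicator hs, Set.indicator_mul_left]

theorem tendsto_intervalIntegral_mul_cos_atTop {f : ℝ → ℝ} {a b : ℝ}
    (hf : IntervalIntegrable f volume a b) :
    Tendsto (fun t : ℝ => ∫ x in a..b, f x * cos (t * x)) atTop (𝓝 0) := by
  have h := (tendsto_setIntegral_mul_cos_atTop measurableSet_Ioc hf.1).sub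
    (tendsto_setIntegral_mul_cos_atTop measurableSet_Ioc hf.2)
  rwa [sub_zero] at h

theorem tendsto_intervalIntegral_mul_sin_sq_atTop {f : ℝ → ℝ} {a b : ℝ}
    (hf : IntervalIntegrable f volume a b) :
    Tendsto (fun t : ℝ => ∫ x in a..b, f x * sin (t * x) ^ 2) atTop
      (𝓝 ((1 / 2) * ∫ x in a..b, f x)) := by
  have hcos := (tendsto_intervalIntegral_mul_cos_atTop hf).comp
    (tendsto_id.const_mul_atTop (two_pos : (0 : ℝ) < 2))
  have hsplit : ∀ t : ℝ, ∫ x in a..b, f x * sin (t * x) ^ 2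
      = (1 / 2) * (∫ x in a..b, f x) - (1 / 2) * ∫ x in a..b, f x * cos (2 * t * x) := by
    intro t
    have hfcos : IntervalIntegrable (fun x => f x * cos (2 * t * x)) volume a b :=
      hf.mul_continuousOn (by fun_prop)
    rw [← intervalIntegral.integral_const_mul, ← intervalIntegral.integral_const_mul,
      ← integral_sub (hf.const_mul _) (hfcos.const_mul _)]
    congr 1 with x
    rw [sin_sq_eq_half_sub, mul_assoc 2 t x]
    ring
  have h := (tendsto_const_nhds (x := (1 / 2) * ∫ x in a..b, f x)).sub
    (hcos.const_mul (1 / 2))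
  rw [mul_zero, sub_zero] at h
  exact h.congr fun t => (hsplit t).symm

theorem isBoundedUnder_norm_intervalIntegral_mul_of_abs_le_one {ι : Type*} {l : Filter ι}
    {φ : ℝ → ℝ} {e : ι → ℝ → ℝ} {a b : ℝ} (hφ : IntervalIntegrable φ volume a b)
    (he : ∀ i x, |e i x| ≤ 1) :
    IsBoundedUnder (· ≤ ·) l fun i => ‖∫ x in a..b, φ x * e i x‖ := by
  refine isBoundedUnder_of ⟨∫ x in Ι a b, |φ x|, fun i => ?_⟩
  refine norm_integral_le_integral_norm_uIoc.trans
    (integral_mono_of_nonneg (.of_forall fun x => norm_nonneg _) hφ.def'.abs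
      (.of_forall fun x => ?_))
  simpa [abs_mul] using mul_le_of_le_one_right (abs_nonneg (φ x)) (he i x)

theorem intervalIntegral_pow_mul_sq_pos (n : ℕ) {r : ℝ} (hr : 0 < r) {g : ℝ → ℝ}
    (hg : Continuous g) (hg0 : g 0 ≠ 0) : 0 < ∫ s in (0 : ℝ)..r, s ^ n * g s ^ 2 := by
  obtain ⟨c, hgc, hc⟩ := ((hg.continuousAt.eventually_ne hg0).filter_mono
    nhdsWithin_le_nhds |>.and (Ioc_mem_nhdsGT hr)).exists
  refine integral_pos hr (by fun_prop) (fun s hs => by have := hs.1.le; positivity)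
    ⟨c, Set.Ioc_subset_Icc_self hc, ?_⟩
  have := hc.1
  positivity

theorem intervalIntegral_mul_sq_div_sq_eq {w f h : ℝ → ℝ} {a b t : ℝ} (hw : Continuous w)
    (hf : Continuous f) (hh : Continuous h) (ht : t ≠ 0) :
    (∫ s in a..b, w s * (t * f s * sin (t * s) + h s * cos (t * s)) ^ 2) / t ^ 2 =
      (∫ s in a..b, w s * f s ^ 2 * sin (t * s) ^ 2) +
        t⁻¹ * (∫ s in a..b, w s * f s * h s * sin (2 * (t * s))) +
        (t ^ 2)⁻¹ * ∫ s in a..b, w s * h s ^ 2 * cos (t * s) ^ 2 := by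
  rw [← intervalIntegral.integral_div, ← intervalIntegral.integral_const_mul,
    ← intervalIntegral.integral_const_mul, ← intervalIntegral.integral_add,
    ← intervalIntegral.integral_add]
  · refine intervalIntegral.integral_congr fun s _ => ?_
    simp only [sin_two_mul]
    field_simp
    ring
  all_goals apply Continuous.intervalIntegrable; fun_prop

theorem tendsto_intervalIntegral_mul_sq_div_sq {w f h : ℝ → ℝ} {a b : ℝ} (hw : Continuous w)
    (hf : Continuous f) (hh : Continuous h) :
    Tendsto (fun k : ℕ => (∫ s in a..b, w s *
        ((k : ℝ) * f s * sin ((k : ℝ) * s) + h s * cos ((k : ℝ) * s)) ^ 2) / (k : ℝ) ^ 2)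
      atTop (𝓝 ((1 / 2) * ∫ s in a..b, w s * f s ^ 2)) := by
  have hk : Tendsto (fun k : ℕ => (k : ℝ)) atTop atTop := tendsto_natCast_atTop_atTop
  have hmain := (tendsto_intervalIntegral_mul_sin_sq_atTop
    ((hw.mul (hf.pow 2)).intervalIntegrable a b)).comp hk
  have hcross := (tendsto_inv_atTop_zero.comp hk).zero_mul_isBoundedUnder_le
    (isBoundedUnder_norm_intervalIntegral_mul_of_abs_le_one
      (e := fun (k : ℕ) s => sin (2 * (k * s))) (((hw.mul hf).mul hh).intervalIntegrable a b)
      fun _ _ => abs_sin_le_one _)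
  have hk2 : Tendsto (fun k : ℕ => (k : ℝ) ^ 2) atTop atTop :=
    (tendsto_pow_atTop two_ne_zero).comp hk
  have hrem := (tendsto_inv_atTop_zero.comp hk2).zero_mul_isBoundedUnder_le
    (isBoundedUnder_norm_intervalIntegral_mul_of_abs_le_one
      (e := fun (k : ℕ) s => cos (k * s) ^ 2) ((hw.mul (hh.pow 2)).intervalIntegrable a b)
      fun _ _ => by rw [abs_pow]; exact pow_le_one₀ (abs_nonneg _) (abs_cos_le_one _))
  have hsum := (hmain.add hcross).add hrem
  rw [add_zero, add_zero] at hsum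
  refine hsum.congr' ?_
  filter_upwards [eventually_ne_atTop 0] with k hk0
  exact (intervalIntegral_mul_sq_div_sq_eq hw hf hh (Nat.cast_ne_zero.2 hk0)).symm

theorem polar_dirichlet_energy_asymptotics_general
    (d : ℕ) (r : ℝ) (hr : 0 < r)
    (g : ℝ → ℝ) (hg : ContDiff ℝ 1 g) (hg0 : g 0 = 1) :
    Tendsto
      (fun k : ℕ =>
        (∫ s in (0:ℝ)..r, s ^ (d - 1) *
          ((k:ℝ) * g s * Real.sin ((k:ℝ) * s) + deriv g s * Real.cos ((k:ℝ) * s)) ^ 2)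
          / (k:ℝ) ^ 2)
      atTop (nhds ((1/2) * ∫ s in (0:ℝ)..r, s ^ (d - 1) * g s ^ 2)) ∧
    0 < (1/2) * (∫ s in (0:ℝ)..r, s ^ (d - 1) * g s ^ 2) ∧
    Tendsto
      (fun k : ℕ =>
        ∫ s in (0:ℝ)..r, s ^ (d - 1) *
          ((k:ℝ) * g s * Real.sin ((k:ℝ) * s) + deriv g s * Real.cos ((k:ℝ) * s)) ^ 2)
      atTop atTop := by
  have hlim := tendsto_intervalIntegral_mul_sq_div_sq (a := 0) (b := r) (continuous_pow (d - 1))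
    hg.continuous (hg.continuous_deriv le_rfl)
  have hpos : 0 < (1 / 2) * ∫ s in (0 : ℝ)..r, s ^ (d - 1) * g s ^ 2 :=
    mul_pos one_half_pos (intervalIntegral_pow_mul_sq_pos (d - 1) hr hg.continuous (by simp [hg0]))
  refine ⟨hlim, hpos, (hlim.pos_mul_atTop hpos
    ((tendsto_pow_atTop two_ne_zero).comp tendsto_natCast_atTop_atTop)).congr' ?_⟩
  filter_upwards [eventually_ne_atTop 0] with k hk
  exact div_mul_cancel₀ _ (pow_ne_zero 2 (Nat.cast_ne_zero.2 hk))

/-- The polar-coordinate computation of Section 2.2 establishing (Eq:Goal3):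
with `J_k = ∫₀^r s^{d-1}(k g(s) sin(ks) + g'(s) cos(ks))² ds`, one has
`J_k/k² → (1/2)∫₀^r s^{d-1} g(s)² ds > 0`, and hence `J_k → +∞`. -/
theorem polar_dirichlet_energy_asymptotics
    (d : ℕ) (hd : 1 ≤ d) (r : ℝ) (hr : 0 < r)
    (g : ℝ → ℝ) (hg : ContDiff ℝ 1 g) (hg0 : g 0 = 1) :
    Tendsto
      (fun k : ℕ =>
        (∫ s in (0:ℝ)..r, s ^ (d - 1) *
          ((k:ℝ) * g s * Real.sin ((k:ℝ) * s) + deriv g s * Real.cos ((k:ℝ) * s)) ^ 2)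
          / (k:ℝ) ^ 2)
      atTop (nhds ((1/2) * ∫ s in (0:ℝ)..r, s ^ (d - 1) * g s ^ 2)) ∧
    0 < (1/2) * (∫ s in (0:ℝ)..r, s ^ (d - 1) * g s ^ 2) ∧
    Tendsto
      (fun k : ℕ =>
        ∫ s in (0:ℝ)..r, s ^ (d - 1) *
          ((k:ℝ) * g s * Real.sin ((k:ℝ) * s) + deriv g s * Real.cos ((k:ℝ) * s)) ^ 2)
      atTop atTop :=
  polar_dirichlet_energy_asymptotics_general d r hr g hg hg0
end

section
/- Let d ≥ 1, x₀ ∈ ℝ^d and r > 0. Let χ : ℝ^d → ℝ be a smooth, radially symmetric function (i.e. χ(x) depends only on ‖x‖) with compact support contained in the open ball B(0;r), satisfying 0 ≤ χ ≤ 1 and χ(0) = 1. For each positive integer k define ψ_k : ℝ^d → ℝ by ψ_k(x) := χ(x − x₀) cos(k‖x − x₀‖). Then ∫_{B(x₀;r)} ‖∇ψ_k(x)‖² dx → +∞ as k → ∞. -/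
open MeasureTheory Filter

variable {E : Type*} [NormedAddCommGroup E] [InnerProductSpace ℝ E]

lemma aux_hasFDerivAt_norm {x : E} (hx : x ≠ 0) :
    HasFDerivAt (fun y : E => ‖y‖) (‖x‖⁻¹ • (innerSL ℝ x)) x := by
  have hnx : ‖x‖ ≠ 0 := norm_ne_zero_iff.mpr hx
  have h1 : HasFDerivAt (fun y : E => (inner ℝ y y : ℝ)) ((2:ℝ) • innerSL ℝ x) x := by
    have := (hasFDerivAt_id x).inner ℝ (hasFDerivAt_id x)
    refine this.congr_fderiv ?_
    ext v
    simp [fderivInnerCLM_apply, real_inner_comm, two_smul]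
  have hxx : (inner ℝ x x : ℝ) ≠ 0 := by
    rw [real_inner_self_eq_norm_sq]; positivity
  have h2 : HasDerivAt Real.sqrt (1 / (2 * Real.sqrt (inner ℝ x x : ℝ))) (inner ℝ x x : ℝ) :=
    Real.hasDerivAt_sqrt hxx
  have h3 := h2.comp_hasFDerivAt (f := fun y : E => (inner ℝ y y : ℝ)) x h1
  have heq : (fun y : E => ‖y‖) = (Real.sqrt ∘ fun y : E => (inner ℝ y y : ℝ)) := by
    funext y
    simp [real_inner_self_eq_norm_sq, Real.sqrt_sq (norm_nonneg y)]
  rw [heq]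
  refine h3.congr_fderiv ?_
  rw [smul_smul]
  congr 1
  rw [real_inner_self_eq_norm_sq, Real.sqrt_sq (norm_nonneg x)]
  field_simp

lemma aux_cos_deriv {x : E} (hx : x ≠ 0) (k : ℝ) :
    HasFDerivAt (fun y : E => Real.cos (k * ‖y‖))
      ((-Real.sin (k * ‖x‖) * (k * ‖x‖⁻¹)) • innerSL ℝ x) x := by
  have h1 := (aux_hasFDerivAt_norm hx).const_mul k
  have h2 := (Real.hasDerivAt_cos (k * ‖x‖)).comp_hasFDerivAt
    (f := fun y : E => k * ‖y‖) x h1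
  refine h2.congr_fderiv ?_
  ext v
  simp
  ring

lemma aux_psi_deriv {x₀ x : E} (hx : x ≠ x₀) (k : ℝ) (χ : E → ℝ) (hχ : ContDiff ℝ (⊤ : ℕ∞) χ) :
    HasFDerivAt (fun y : E => χ (y - x₀) * Real.cos (k * ‖y - x₀‖))
      (χ (x - x₀) • ((-Real.sin (k * ‖x - x₀‖) * (k * ‖x - x₀‖⁻¹)) • innerSL ℝ (x - x₀))
        + Real.cos (k * ‖x - x₀‖) • (fderiv ℝ χ (x - x₀))) x := by
  have hz : x - x₀ ≠ 0 := sub_ne_zero.mpr hx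
  have hsub : HasFDerivAt (fun y : E => y - x₀) (ContinuousLinearMap.id ℝ E) x :=
    (hasFDerivAt_id x).sub_const x₀
  have hχ' : HasFDerivAt (fun y : E => χ (y - x₀))
      ((fderiv ℝ χ (x - x₀)).comp (ContinuousLinearMap.id ℝ E)) x :=
    HasFDerivAt.comp (g := χ) x ((hχ.differentiable (by simp) (x - x₀)).hasFDerivAt) hsub
  have hcos' : HasFDerivAt (fun y : E => Real.cos (k * ‖y - x₀‖))
      (((-Real.sin (k * ‖x - x₀‖) * (k * ‖x - x₀‖⁻¹)) • innerSL ℝ (x - x₀)).comp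
        (ContinuousLinearMap.id ℝ E)) x :=
    HasFDerivAt.comp (g := fun y : E => Real.cos (k * ‖y‖)) x (aux_cos_deriv hz k) hsub
  have := hχ'.mul hcos'
  simp only [ContinuousLinearMap.comp_id] at this
  exact this

set_option maxHeartbeats 1000000 in
set_option synthInstance.maxHeartbeats 400000 in
lemma aux_grad [CompleteSpace E] {x₀ x : E} (hx : x ≠ x₀) (k : ℝ) (hk : 0 ≤ k) (χ : E → ℝ)
    (hχ : ContDiff ℝ (⊤ : ℕ∞) χ) (h01 : ∀ y, 0 ≤ χ y ∧ χ y ≤ 1) (M : ℝ) (hM0 : 0 ≤ M)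
    (hM : ∀ y, ‖fderiv ℝ χ y‖ ≤ M) :
    ‖gradient (fun y => χ (y - x₀) * Real.cos (k * ‖y - x₀‖)) x‖ ≤ k + M ∧
    k * (χ (x - x₀) * |Real.sin (k * ‖x - x₀‖)|) ≤
      ‖gradient (fun y => χ (y - x₀) * Real.cos (k * ‖y - x₀‖)) x‖ + M := by
  set z := x - x₀ with hz_def
  have hz : z ≠ 0 := sub_ne_zero.mpr hx
  have hnz : ‖z‖ ≠ 0 := norm_ne_zero_iff.mpr hz
  have hm0 : 0 ≤ ‖z‖ := norm_nonneg z
  set s := Real.sin (k * ‖z‖) with hs_def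
  set co := Real.cos (k * ‖z‖) with hco_def
  have hs1 : |s| ≤ 1 := abs_le.mpr ⟨Real.neg_one_le_sin _, Real.sin_le_one _⟩
  have hco1 : |co| ≤ 1 := abs_le.mpr ⟨Real.neg_one_le_cos _, Real.cos_le_one _⟩
  have hχ0 := (h01 z).1
  have hχ1 := (h01 z).2
  set D : E →L[ℝ] ℝ :=
    χ z • ((-s * (k * ‖z‖⁻¹)) • innerSL ℝ z) + co • (fderiv ℝ χ z) with hD_def
  have hD : HasFDerivAt (fun y : E => χ (y - x₀) * Real.cos (k * ‖y - x₀‖)) D x :=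
    aux_psi_deriv hx k χ hχ
  have hgrad : gradient (fun y : E => χ (y - x₀) * Real.cos (k * ‖y - x₀‖)) x
      = (InnerProductSpace.toDual ℝ E).symm D := by
    rw [gradient, hD.fderiv]
  rw [hgrad, LinearIsometryEquiv.norm_map]
  have hA : ‖χ z • ((-s * (k * ‖z‖⁻¹)) • innerSL ℝ z)‖ ≤ k := by
    have e0 : ‖χ z • ((-s * (k * ‖z‖⁻¹)) • innerSL ℝ z)‖
        ≤ |χ z| * (|(-s * (k * ‖z‖⁻¹))| * ‖z‖) := by
      calc ‖χ z • ((-s * (k * ‖z‖⁻¹)) • innerSL ℝ z)‖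
          ≤ ‖χ z‖ * ‖(-s * (k * ‖z‖⁻¹)) • innerSL ℝ z‖ :=
            ContinuousLinearMap.opNorm_smul_le _ _
        _ ≤ ‖χ z‖ * (‖(-s * (k * ‖z‖⁻¹))‖ * ‖innerSL ℝ z‖) := by
            gcongr
            exact ContinuousLinearMap.opNorm_smul_le _ _
        _ = |χ z| * (|(-s * (k * ‖z‖⁻¹))| * ‖z‖) := by
            rw [innerSL_apply_norm, Real.norm_eq_abs, Real.norm_eq_abs]
    refine e0.trans ?_
    have e1 : |(-s * (k * ‖z‖⁻¹))| = |s| * (k * ‖z‖⁻¹) := by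
      rw [abs_mul, abs_neg]
      congr 1
      rw [abs_of_nonneg (by positivity)]
    rw [e1, abs_of_nonneg hχ0]
    have e2 : |s| * (k * ‖z‖⁻¹) * ‖z‖ = |s| * k := by
      field_simp
    calc χ z * (|s| * (k * ‖z‖⁻¹) * ‖z‖) = χ z * (|s| * k) := by rw [e2]
      _ ≤ 1 * (1 * k) := by
          apply mul_le_mul hχ1 _ (by positivity) zero_le_one
          exact mul_le_mul hs1 le_rfl hk zero_le_one
      _ = k := by ring
  have hB : ‖co • (fderiv ℝ χ z)‖ ≤ M := by
    refine (ContinuousLinearMap.opNorm_smul_le _ _).trans ?_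
    rw [Real.norm_eq_abs]
    calc |co| * ‖fderiv ℝ χ z‖ ≤ 1 * M :=
          mul_le_mul hco1 (hM z) (norm_nonneg _) zero_le_one
      _ = M := one_mul M
  constructor
  · calc ‖D‖ ≤ ‖χ z • ((-s * (k * ‖z‖⁻¹)) • innerSL ℝ z)‖ + ‖co • (fderiv ℝ χ z)‖ :=
          norm_add_le _ _
      _ ≤ k + M := add_le_add hA hB
  · set u : E := ‖z‖⁻¹ • z with hu_def
    have hu : ‖u‖ = 1 := by
      rw [hu_def, norm_smul, Real.norm_eq_abs, abs_of_nonneg (by positivity)]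
      field_simp
    have hinner : (inner ℝ ((InnerProductSpace.toDual ℝ E).symm D) u : ℝ) = D u :=
      InnerProductSpace.toDual_symm_apply
    have hzu : (inner ℝ z u : ℝ) = ‖z‖ := by
      rw [hu_def, real_inner_smul_right, real_inner_self_eq_norm_sq]
      field_simp
    have hDu : D u = -(χ z * s * k) + co * (fderiv ℝ χ z u) := by
      rw [hD_def]
      simp only [ContinuousLinearMap.add_apply, ContinuousLinearMap.coe_smul',
        Pi.smul_apply, smul_eq_mul, innerSL_apply_apply]
      rw [hzu]
      field_simp
    have habs : |D u| ≤ ‖(InnerProductSpace.toDual ℝ E).symm D‖ := by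
      rw [← hinner]
      calc |(inner ℝ ((InnerProductSpace.toDual ℝ E).symm D) u : ℝ)|
          ≤ ‖(InnerProductSpace.toDual ℝ E).symm D‖ * ‖u‖ := abs_real_inner_le_norm _ u
        _ = ‖(InnerProductSpace.toDual ℝ E).symm D‖ := by rw [hu, mul_one]
    have hDχu : |fderiv ℝ χ z u| ≤ M := by
      calc |fderiv ℝ χ z u| = ‖fderiv ℝ χ z u‖ := (Real.norm_eq_abs _).symm
        _ ≤ ‖fderiv ℝ χ z‖ * ‖u‖ := (fderiv ℝ χ z).le_opNorm u
        _ ≤ M := by rw [hu, mul_one]; exact hM z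
    have key : |χ z * s * k| ≤ ‖(InnerProductSpace.toDual ℝ E).symm D‖ + M := by
      have e3 : χ z * s * k = co * (fderiv ℝ χ z u) - D u := by rw [hDu]; ring
      rw [e3, sub_eq_add_neg]
      calc |co * (fderiv ℝ χ z u) + -(D u)| ≤ |co * (fderiv ℝ χ z u)| + |(-(D u))| :=
            abs_add_le _ _
        _ = |co| * |fderiv ℝ χ z u| + |D u| := by rw [abs_mul, abs_neg]
        _ ≤ 1 * M + ‖(InnerProductSpace.toDual ℝ E).symm D‖ :=
            add_le_add (mul_le_mul hco1 hDχu (abs_nonneg _) zero_le_one) habs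
        _ = ‖(InnerProductSpace.toDual ℝ E).symm D‖ + M := by ring
    have e4 : k * (χ z * |s|) = |χ z * s * k| := by
      rw [abs_mul, abs_mul, abs_of_nonneg hχ0, abs_of_nonneg hk]
      ring
    rw [e4, ← LinearIsometryEquiv.norm_map (InnerProductSpace.toDual ℝ E).symm D]
    exact key


set_option maxHeartbeats 2000000 in
set_option synthInstance.maxHeartbeats 400000 in
/-- Estimate (Eq:Goal3) of Section 2.2: the Dirichlet energy of the
oscillating test functions `ψ_k(x) = χ(x-x₀) cos(k‖x-x₀‖)` blows up as the
frequency `k` grows. -/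
theorem dirichlet_energy_blow_up
    (d : ℕ) (hd : 1 ≤ d) (x₀ : EuclideanSpace ℝ (Fin d)) (r : ℝ) (hr : 0 < r)
    (χ : EuclideanSpace ℝ (Fin d) → ℝ)
    (hχsmooth : ContDiff ℝ (⊤ : ℕ∞) χ)
    (hrad : ∀ x y : EuclideanSpace ℝ (Fin d), ‖x‖ = ‖y‖ → χ x = χ y)
    (hsupp : tsupport χ ⊆ Metric.ball 0 r)
    (h01 : ∀ x, 0 ≤ χ x ∧ χ x ≤ 1) (hχ0 : χ 0 = 1) :
    Tendsto
      (fun k : ℕ =>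
        ∫ x in Metric.ball x₀ r,
          ‖gradient (fun y => χ (y - x₀) * Real.cos ((k:ℝ) * ‖y - x₀‖)) x‖ ^ 2)
      atTop atTop := by
  classical
  haveI hne : Nonempty (Fin d) := ⟨⟨0, hd⟩⟩
  haveI : Nontrivial (EuclideanSpace ℝ (Fin d)) := by
    refine ⟨0, EuclideanSpace.single ⟨0, hd⟩ (1:ℝ), fun h => ?_⟩
    have := congrArg (fun v : EuclideanSpace ℝ (Fin d) => v ⟨0, hd⟩) h
    simp [EuclideanSpace.single_apply] at this
  -- bound on the derivative of χ
  have hcs : HasCompactSupport χ :=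
    IsCompact.of_isClosed_subset (isCompact_closedBall (0 : EuclideanSpace ℝ (Fin d)) r)
      (isClosed_tsupport χ) (hsupp.trans Metric.ball_subset_closedBall)
  obtain ⟨M₀, hM₀⟩ : ∃ C, ∀ y, ‖fderiv ℝ χ y‖ ≤ C :=
    (hcs.fderiv ℝ).exists_bound_of_continuous (hχsmooth.continuous_fderiv (by simp))
  set M : ℝ := max M₀ 0 with hM_def
  have hM0 : 0 ≤ M := le_max_right _ _
  have hM : ∀ y, ‖fderiv ℝ χ y‖ ≤ M := fun y => (hM₀ y).trans (le_max_left _ _)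
  -- unit vector and radial profile
  set e : EuclideanSpace ℝ (Fin d) := EuclideanSpace.single ⟨0, hd⟩ (1:ℝ) with he_def
  have hnorme : ‖e‖ = 1 := by
    rw [he_def, EuclideanSpace.norm_single]
    norm_num
  set φ : ℝ → ℝ := fun t => χ (t • e) with hφ_def
  have hφrad : ∀ y : EuclideanSpace ℝ (Fin d), χ y = φ ‖y‖ := by
    intro y
    apply hrad
    rw [norm_smul, hnorme, Real.norm_eq_abs, abs_of_nonneg (norm_nonneg y), mul_one]
  have hφcont : Continuous φ := hχsmooth.continuous.comp (continuous_id.smul continuous_const)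
  have hφ0 : ∀ t, 0 ≤ φ t ∧ φ t ≤ 1 := fun t => h01 _
  have hφzero : ∀ t, r ≤ t → φ t = 0 := by
    intro t ht
    rw [hφ_def]
    apply image_eq_zero_of_notMem_tsupport
    intro hmem
    have := hsupp hmem
    rw [Metric.mem_ball, dist_zero_right, norm_smul, hnorme, mul_one, Real.norm_eq_abs] at this
    have : t < r := lt_of_abs_lt this
    linarith
  -- small radius on which χ ≥ 1/2
  obtain ⟨δ, hδpos, hδ⟩ :=
    Metric.continuousAt_iff.mp (hχsmooth.continuous.continuousAt (x := 0)) (1/2) one_half_pos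
  set ρ : ℝ := min (δ/2) (r/2) with hρ_def
  have hρpos : 0 < ρ := lt_min (by linarith) (by linarith)
  have hρr : ρ < r := (min_le_right _ _).trans_lt (by linarith)
  have hφhalf : ∀ t, 0 ≤ t → t ≤ ρ → (1:ℝ)/2 ≤ φ t := by
    intro t ht0 htρ
    have hdist : dist (t • e) (0 : EuclideanSpace ℝ (Fin d)) < δ := by
      rw [dist_zero_right, norm_smul, hnorme, mul_one, Real.norm_eq_abs, abs_of_nonneg ht0]
      have : ρ ≤ δ/2 := min_le_left _ _
      linarith
    have := hδ hdist
    rw [hχ0, Real.dist_eq] at this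
    have := abs_lt.mp this
    simp only [hφ_def]
    linarith [this.1]
  -- pointwise gradient bounds
  have hae_ne : ∀ᵐ x : EuclideanSpace ℝ (Fin d), x ≠ x₀ := by
    rw [ae_iff]
    have : {x : EuclideanSpace ℝ (Fin d) | ¬ x ≠ x₀} = {x₀} := by
      ext x; simp
    rw [this]
    exact measure_singleton x₀
  have hmeas : ∀ k : ℕ, Measurable fun x : EuclideanSpace ℝ (Fin d) =>
      ‖gradient (fun y => χ (y - x₀) * Real.cos ((k:ℝ) * ‖y - x₀‖)) x‖ ^ 2 := by
    intro k
    have m1 : Measurable (fderiv ℝ (fun y : EuclideanSpace ℝ (Fin d) =>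
        χ (y - x₀) * Real.cos ((k:ℝ) * ‖y - x₀‖))) := measurable_fderiv ℝ _
    have m2 : Measurable (gradient (fun y : EuclideanSpace ℝ (Fin d) =>
        χ (y - x₀) * Real.cos ((k:ℝ) * ‖y - x₀‖))) :=
      ((InnerProductSpace.toDual ℝ
        (EuclideanSpace ℝ (Fin d))).symm.continuous.measurable).comp m1
    exact m2.norm.pow_const 2
  have hint : ∀ k : ℕ, IntegrableOn (fun x : EuclideanSpace ℝ (Fin d) =>
      ‖gradient (fun y => χ (y - x₀) * Real.cos ((k:ℝ) * ‖y - x₀‖)) x‖ ^ 2)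
      (Metric.ball x₀ r) := by
    intro k
    refine Integrable.mono' (g := fun _ => ((k:ℝ) + M)^2)
      (integrableOn_const measure_ball_lt_top.ne)
      ((hmeas k).aestronglyMeasurable.restrict)
      (ae_restrict_of_ae (hae_ne.mono fun x hx => ?_))
    have hb := (aux_grad hx (k:ℝ) (Nat.cast_nonneg k) χ hχsmooth h01 M hM0 hM).1
    rw [Real.norm_eq_abs, abs_of_nonneg (by positivity)]
    have hg0 : (0:ℝ) ≤
        ‖gradient (fun y => χ (y - x₀) * Real.cos ((k:ℝ) * ‖y - x₀‖)) x‖ := norm_nonneg _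
    beta_reduce
    nlinarith [Nat.cast_nonneg (α := ℝ) k]
  -- the oscillating lower-bound integrand
  have hsubcont : Continuous fun x : EuclideanSpace ℝ (Fin d) => x - x₀ :=
    continuous_id.sub continuous_const
  have hcontQ : ∀ k : ℕ, Continuous fun x : EuclideanSpace ℝ (Fin d) =>
      (χ (x - x₀) * Real.sin ((k:ℝ) * ‖x - x₀‖))^2 := by
    intro k
    exact ((hχsmooth.continuous.comp hsubcont).mul
      (Real.continuous_sin.comp (continuous_const.mul hsubcont.norm))).pow 2
  have hintQ : ∀ k : ℕ, IntegrableOn (fun x : EuclideanSpace ℝ (Fin d) =>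
      (χ (x - x₀) * Real.sin ((k:ℝ) * ‖x - x₀‖))^2) (Metric.ball x₀ r) := by
    intro k
    exact ((hcontQ k).continuousOn.integrableOn_compact
      (isCompact_closedBall x₀ r)).mono_set Metric.ball_subset_closedBall
  -- Step 1 : lower bound for the Dirichlet energy by the oscillating integral
  set V : ℝ := (volume (Metric.ball x₀ r)).toReal with hV_def
  have hV0 : 0 ≤ V := ENNReal.toReal_nonneg
  have step1 : ∀ k : ℕ,
      (k:ℝ)^2 / 2 * (∫ x in Metric.ball x₀ r,
          (χ (x - x₀) * Real.sin ((k:ℝ) * ‖x - x₀‖))^2) - M^2 * V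
        ≤ ∫ x in Metric.ball x₀ r,
          ‖gradient (fun y => χ (y - x₀) * Real.cos ((k:ℝ) * ‖y - x₀‖)) x‖ ^ 2 := by
    intro k
    have hintL : IntegrableOn (fun x : EuclideanSpace ℝ (Fin d) =>
        (k:ℝ)^2 / 2 * (χ (x - x₀) * Real.sin ((k:ℝ) * ‖x - x₀‖))^2 - M^2)
        (Metric.ball x₀ r) := by
      exact ((hintQ k).const_mul ((k:ℝ)^2/2)).sub
        (integrableOn_const measure_ball_lt_top.ne)
    have hmono : ∫ x in Metric.ball x₀ r,
        ((k:ℝ)^2 / 2 * (χ (x - x₀) * Real.sin ((k:ℝ) * ‖x - x₀‖))^2 - M^2)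
        ≤ ∫ x in Metric.ball x₀ r,
          ‖gradient (fun y => χ (y - x₀) * Real.cos ((k:ℝ) * ‖y - x₀‖)) x‖ ^ 2 := by
      refine integral_mono_ae hintL (hint k) (ae_restrict_of_ae (hae_ne.mono fun x hx => ?_))
      have hb := (aux_grad hx (k:ℝ) (Nat.cast_nonneg k) χ hχsmooth h01 M hM0 hM).2
      set g := ‖gradient (fun y => χ (y - x₀) * Real.cos ((k:ℝ) * ‖y - x₀‖)) x‖ with hg_def
      have hg0 : 0 ≤ g := norm_nonneg _
      have ha0 : 0 ≤ (k:ℝ) * (χ (x - x₀) * |Real.sin ((k:ℝ) * ‖x - x₀‖)|) := by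
        have := (h01 (x - x₀)).1
        positivity
      have hsq : ((k:ℝ) * (χ (x - x₀) * |Real.sin ((k:ℝ) * ‖x - x₀‖)|))^2 ≤ (g + M)^2 :=
        pow_le_pow_left₀ ha0 hb 2
      have he : ((k:ℝ) * (χ (x - x₀) * |Real.sin ((k:ℝ) * ‖x - x₀‖)|))^2
          = (k:ℝ)^2 * (χ (x - x₀) * Real.sin ((k:ℝ) * ‖x - x₀‖))^2 := by
        rw [mul_pow, mul_pow, mul_pow, sq_abs]
      simp only [smul_eq_mul]
      nlinarith [sq_nonneg (g - M)]
    calc (k:ℝ)^2 / 2 * (∫ x in Metric.ball x₀ r,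
          (χ (x - x₀) * Real.sin ((k:ℝ) * ‖x - x₀‖))^2) - M^2 * V
        = ∫ x in Metric.ball x₀ r,
          ((k:ℝ)^2 / 2 * (χ (x - x₀) * Real.sin ((k:ℝ) * ‖x - x₀‖))^2 - M^2) := by
          rw [integral_sub (((hintQ k).const_mul ((k:ℝ)^2/2)))
            (integrableOn_const measure_ball_lt_top.ne),
            integral_const_mul, setIntegral_const, smul_eq_mul, measureReal_def, hV_def]
          ring
      _ ≤ _ := hmono
  -- Step 2 : reduction to a one-dimensional radial integral
  have hdim : Module.finrank ℝ (EuclideanSpace ℝ (Fin d)) = d := finrank_euclideanSpace_fin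
  set v : ℝ := (volume (Metric.ball (0 : EuclideanSpace ℝ (Fin d)) 1)).toReal with hv_def
  have hv0 : 0 < v := by
    rw [hv_def]
    exact ENNReal.toReal_pos (ne_of_gt (Metric.measure_ball_pos volume 0 one_pos))
      measure_ball_lt_top.ne
  have step2 : ∀ k : ℕ,
      ∫ x in Metric.ball x₀ r, (χ (x - x₀) * Real.sin ((k:ℝ) * ‖x - x₀‖))^2
      = (d : ℝ) * v * ∫ t in Set.Ioi (0:ℝ), t ^ (d - 1) * (φ t * Real.sin ((k:ℝ) * t))^2 := by
    intro k
    have h1 : ∫ x in Metric.ball x₀ r, (χ (x - x₀) * Real.sin ((k:ℝ) * ‖x - x₀‖))^2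
        = ∫ x, (χ (x - x₀) * Real.sin ((k:ℝ) * ‖x - x₀‖))^2 := by
      apply setIntegral_eq_integral_of_forall_compl_eq_zero
      intro x hx
      have hnlt : ¬ ‖x - x₀‖ < r := by
        rw [Metric.mem_ball, dist_eq_norm] at hx; exact hx
      have hz : χ (x - x₀) = 0 := by
        apply image_eq_zero_of_notMem_tsupport
        intro hmem
        exact hnlt (by simpa [Metric.mem_ball, dist_zero_right] using hsupp hmem)
      rw [hz]; ring
    have h2 : ∫ x, (χ (x - x₀) * Real.sin ((k:ℝ) * ‖x - x₀‖))^2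
        = ∫ y, (χ y * Real.sin ((k:ℝ) * ‖y‖))^2 :=
      integral_sub_right_eq_self
        (fun y : EuclideanSpace ℝ (Fin d) => (χ y * Real.sin ((k:ℝ) * ‖y‖))^2) x₀
    have h3 : ∫ y : EuclideanSpace ℝ (Fin d), (χ y * Real.sin ((k:ℝ) * ‖y‖))^2
        = ∫ y : EuclideanSpace ℝ (Fin d),
            (fun t : ℝ => (φ t * Real.sin ((k:ℝ) * t))^2) ‖y‖ :=
      integral_congr_ae (Filter.Eventually.of_forall fun y => by
        beta_reduce
        rw [hφrad y])
    have h4 := MeasureTheory.integral_fun_norm_addHaar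
      (volume : Measure (EuclideanSpace ℝ (Fin d)))
      (fun t : ℝ => (φ t * Real.sin ((k:ℝ) * t))^2)
    rw [h1, h2, h3, h4, hdim]
    simp only [nsmul_eq_mul, smul_eq_mul]
    rw [measureReal_def, ← hv_def]
    ring
  -- Step 3 : the one-dimensional integral is bounded below for large k
  have hJcont : ∀ k : ℕ,
      Continuous fun t : ℝ => t ^ (d-1) * (φ t * Real.sin ((k:ℝ) * t))^2 := by
    intro k
    exact (continuous_pow (d-1)).mul
      ((hφcont.mul (Real.continuous_sin.comp (continuous_const.mul continuous_id))).pow 2)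
  have hJint : ∀ k : ℕ, IntegrableOn
      (fun t : ℝ => t ^ (d-1) * (φ t * Real.sin ((k:ℝ)*t))^2) (Set.Ioi 0) := by
    intro k
    have h0 : IntegrableOn (fun t : ℝ => t ^ (d-1) * (φ t * Real.sin ((k:ℝ)*t))^2)
        (Set.Ioc 0 r) := (hJcont k).integrableOn_Ioc
    have h1 : IntegrableOn (fun t : ℝ => t ^ (d-1) * (φ t * Real.sin ((k:ℝ)*t))^2)
        (Set.Ioi r) := by
      apply integrableOn_zero.congr_fun ?_ measurableSet_Ioi
      intro t ht
      beta_reduce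
      rw [hφzero t (le_of_lt ht)]
      ring
    exact (h0.union h1).mono_set (fun t ht => by
      rcases le_or_gt t r with h|h
      · exact Or.inl ⟨ht, h⟩
      · exact Or.inr h)
  set a : ℝ := ρ/2 with ha_def
  have ha0 : 0 < a := by rw [ha_def]; positivity
  have haρ : a ≤ ρ := by rw [ha_def]; linarith
  have step3 : ∀ k : ℕ, (8:ℝ)/ρ ≤ (k:ℝ) →
      a^(d-1) * (1/4) * (ρ/8)
        ≤ ∫ t in Set.Ioi (0:ℝ), t ^ (d-1) * (φ t * Real.sin ((k:ℝ)*t))^2 := by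
    intro k hk
    have hk0 : (0:ℝ) < (k:ℝ) := lt_of_lt_of_le (by positivity) hk
    have h8 : (8:ℝ) ≤ (k:ℝ) * ρ := by
      rw [div_le_iff₀ hρpos] at hk
      linarith
    -- pointwise bound on `Ioc a ρ`
    have hpt : ∀ t ∈ Set.Ioc a ρ,
        a^(d-1) * (1/4) * Real.sin ((k:ℝ)*t)^2
          ≤ t^(d-1) * (φ t * Real.sin ((k:ℝ)*t))^2 := by
      intro t ht
      have ht0 : 0 < t := lt_trans ha0 ht.1
      have h1 : a^(d-1) ≤ t^(d-1) := pow_le_pow_left₀ ha0.le ht.1.le _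
      have h2 : (1/2:ℝ) ≤ φ t := hφhalf t ht0.le ht.2
      have h4 : (1/4:ℝ) * Real.sin ((k:ℝ)*t)^2 ≤ (φ t * Real.sin ((k:ℝ)*t))^2 := by
        rw [mul_pow]
        have h22 : (1/2:ℝ)*(1/2) ≤ φ t * φ t :=
          mul_le_mul h2 h2 (by norm_num) (le_trans (by norm_num) h2)
        nlinarith [h22, sq_nonneg (Real.sin ((k:ℝ)*t))]
      calc a^(d-1) * (1/4) * Real.sin ((k:ℝ)*t)^2
          = a^(d-1) * ((1/4) * Real.sin ((k:ℝ)*t)^2) := by ring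
        _ ≤ t^(d-1) * (φ t * Real.sin ((k:ℝ)*t))^2 :=
            mul_le_mul h1 h4 (by positivity) (pow_nonneg ht0.le _)
    have hmono2 : ∫ t in Set.Ioc a ρ, a^(d-1) * (1/4) * Real.sin ((k:ℝ)*t)^2
        ≤ ∫ t in Set.Ioc a ρ, t^(d-1) * (φ t * Real.sin ((k:ℝ)*t))^2 := by
      refine setIntegral_mono_on ?_ ?_ measurableSet_Ioc hpt
      · exact ((continuous_const.mul
          ((Real.continuous_sin.comp (continuous_const.mul continuous_id)).pow 2))).integrableOn_Ioc
      · exact (hJcont k).integrableOn_Ioc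
    have hmono1 : ∫ t in Set.Ioc a ρ, t^(d-1) * (φ t * Real.sin ((k:ℝ)*t))^2
        ≤ ∫ t in Set.Ioi (0:ℝ), t^(d-1) * (φ t * Real.sin ((k:ℝ)*t))^2 := by
      refine setIntegral_mono_set (hJint k) ?_ ?_
      · refine (ae_restrict_iff' measurableSet_Ioi).mpr (ae_of_all _ fun t ht => ?_)
        have ht0 : (0:ℝ) ≤ t := le_of_lt ht
        positivity
      · exact HasSubset.Subset.eventuallyLE (fun t ht => lt_trans ha0 ht.1)
    -- the sine integral
    have hsin : ρ/8 ≤ ∫ t in Set.Ioc a ρ, Real.sin ((k:ℝ)*t)^2 := by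
      have e1 : ∫ t in Set.Ioc a ρ, Real.sin ((k:ℝ)*t)^2
          = (k:ℝ)⁻¹ * ((Real.sin ((k:ℝ)*a) * Real.cos ((k:ℝ)*a)
              - Real.sin ((k:ℝ)*ρ) * Real.cos ((k:ℝ)*ρ) + (k:ℝ)*ρ - (k:ℝ)*a) / 2) := by
        rw [← intervalIntegral.integral_of_le haρ,
          intervalIntegral.integral_comp_mul_left (fun u => Real.sin u ^ 2) (ne_of_gt hk0),
          integral_sin_sq, smul_eq_mul]
      rw [e1]
      have b1 : (-1:ℝ) ≤ Real.sin ((k:ℝ)*a) * Real.cos ((k:ℝ)*a) := by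
        nlinarith [Real.neg_one_le_sin ((k:ℝ)*a), Real.sin_le_one ((k:ℝ)*a),
          Real.neg_one_le_cos ((k:ℝ)*a), Real.cos_le_one ((k:ℝ)*a)]
      have b2 : Real.sin ((k:ℝ)*ρ) * Real.cos ((k:ℝ)*ρ) ≤ 1 := by
        nlinarith [Real.neg_one_le_sin ((k:ℝ)*ρ), Real.sin_le_one ((k:ℝ)*ρ),
          Real.neg_one_le_cos ((k:ℝ)*ρ), Real.cos_le_one ((k:ℝ)*ρ)]
      rw [inv_mul_eq_div, le_div_iff₀ hk0, ha_def]
      nlinarith [h8]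
    calc a^(d-1) * (1/4) * (ρ/8)
        ≤ a^(d-1) * (1/4) * ∫ t in Set.Ioc a ρ, Real.sin ((k:ℝ)*t)^2 := by
          have h40 : (0:ℝ) ≤ a^(d-1) * (1/4) := by positivity
          exact mul_le_mul_of_nonneg_left hsin h40
      _ = ∫ t in Set.Ioc a ρ, a^(d-1) * (1/4) * Real.sin ((k:ℝ)*t)^2 := by
          rw [integral_const_mul]
      _ ≤ ∫ t in Set.Ioc a ρ, t^(d-1) * (φ t * Real.sin ((k:ℝ)*t))^2 := hmono2
      _ ≤ _ := hmono1
  -- final assembly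
  set c₀ : ℝ := a^(d-1) * (1/4) * (ρ/8) with hc0_def
  have hc00 : 0 < c₀ := by rw [hc0_def]; positivity
  have hd0 : (0:ℝ) < (d:ℝ) := by exact_mod_cast hd
  set A : ℝ := (d:ℝ) * v * c₀ / 2 with hA_def
  have hA0 : 0 < A := div_pos (mul_pos (mul_pos hd0 hv0) hc00) two_pos
  have hfinal : ∀ k : ℕ, (8:ℝ)/ρ ≤ (k:ℝ) →
      A * (k:ℝ)^2 - M^2 * V
        ≤ ∫ x in Metric.ball x₀ r,
          ‖gradient (fun y => χ (y - x₀) * Real.cos ((k:ℝ) * ‖y - x₀‖)) x‖ ^ 2 := by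
    intro k hk
    have h3 := step3 k hk
    have h2 := step2 k
    have h1 := step1 k
    have hmul : A * (k:ℝ)^2
        ≤ (k:ℝ)^2 / 2 * ∫ x in Metric.ball x₀ r,
            (χ (x - x₀) * Real.sin ((k:ℝ) * ‖x - x₀‖))^2 := by
      rw [h2]
      have e : A * (k:ℝ)^2 = (k:ℝ)^2/2 * ((d:ℝ) * v * c₀) := by rw [hA_def]; ring
      rw [e]
      apply mul_le_mul_of_nonneg_left _ (by positivity)
      calc (d:ℝ) * v * c₀ ≤ (d:ℝ) * v *
            ∫ t in Set.Ioi (0:ℝ), t ^ (d - 1) * (φ t * Real.sin ((k:ℝ) * t))^2 := by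
            apply mul_le_mul_of_nonneg_left _ (by positivity)
            rw [hc0_def]
            exact h3
        _ = _ := rfl
    linarith
  have htend : Tendsto (fun k : ℕ => A * (k:ℝ)^2 - M^2 * V) atTop atTop := by
    simp only [sub_eq_add_neg]
    apply tendsto_atTop_add_const_right
    apply Tendsto.const_mul_atTop hA0
    exact (tendsto_pow_atTop two_ne_zero).comp tendsto_natCast_atTop_atTop
  refine tendsto_atTop_mono' atTop ?_ htend
  filter_upwards [eventually_ge_atTop ⌈(8:ℝ)/ρ⌉₊] with k hk
  exact hfinal k (le_trans (Nat.le_ceil _) (Nat.cast_le.mpr hk))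
end

section
/- There exists a constant C > 0 such that the following holds. Let n ≥ 1 be an integer, let 0 ≤ a₁ < b₁ < a₂ < b₂ < ⋯ < a_n < b_n ≤ 1, set A := ⋃_{i=1}^n (a_i, b_i), and let η ∈ (0,1]. Then there exists a function u : ℝ → ℝ that is Lipschitz with Lipschitz constant at most 1/η and satisfies: 0 ≤ u ≤ 1 everywhere; u(x) = 1 for every x ∈ A; u(x) = 0 whenever dist(x, A) ≥ η; ∫₀¹ (u′(x))² dx ≤ C·n/η; and ∫₀¹ (1 − 𝟙_A(x))·u(x)³ dx ≤ C·n·η (where u′ denotes the almost-everywhere defined derivative of the Lipschitz function u and 𝟙_A the indicator function of A). -/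
open MeasureTheory intervalIntegral

/-!
The profile is `u = max (1 - d_A / η) 0` with `d_A` the distance to `A`. It is
`1/η`-Lipschitz, and off the transition layer `{x ∉ A | d_A(x) ≤ η}` it is locally constant
and `(1 - 𝟙_A) u³` vanishes. Both integrands are therefore bounded by a constant (`1/η²`,
resp. `1`) times the indicator of this layer, and for a union of `n` intervals the layer lies
within the `2n` one-sided `η`-neighbourhoods of the endpoints, so its length is at most `2nη`.
-/

open Set Metric Filter Topology

section Profile

variable {α : Type*} [PseudoMetricSpace α] {A : Set α} {η : ℝ} {x : α}

/-- The paper's `φ_η ∘ h_A`: off `A` the signed distance `h_A` is `infDist · A`, and on `A`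
both sides equal `1`. -/
noncomputable def distProfile (A : Set α) (η : ℝ) (x : α) : ℝ :=
  max (1 - infDist x A / η) 0

def transitionLayer (A : Set α) (η : ℝ) : Set α :=
  {x | x ∉ A ∧ infDist x A ≤ η}

lemma distProfile_nonneg : 0 ≤ distProfile A η x :=
  le_max_right _ _

lemma distProfile_le_one (hη : 0 ≤ η) : distProfile A η x ≤ 1 :=
  max_le (sub_le_self _ (div_nonneg infDist_nonneg hη)) zero_le_one

lemma distProfile_eq_one_of_mem (hx : x ∈ A) : distProfile A η x = 1 := by
  simp [distProfile, infDist_zero_of_mem hx]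

lemma distProfile_eq_zero_of_le_infDist (hη : 0 < η) (hx : η ≤ infDist x A) :
    distProfile A η x = 0 :=
  max_eq_right <| sub_nonpos.2 <| (one_le_div hη).2 hx

lemma distProfile_eq_zero_of_notMem_transitionLayer (hη : 0 < η) (hxA : x ∉ A)
    (hx : x ∉ transitionLayer A η) : distProfile A η x = 0 :=
  distProfile_eq_zero_of_le_infDist hη (not_le.1 fun h => hx ⟨hxA, h⟩).le

lemma lipschitzWith_distProfile (hη : 0 ≤ η) :
    LipschitzWith (Real.toNNReal (1 / η)) (distProfile A η) := by
  have hφ : LipschitzWith (Real.toNNReal (1 / η)) fun t : ℝ => max (1 - t / η) 0 := by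
    refine (LipschitzWith.of_dist_le_mul fun (s t : ℝ) => ?_).max_const 0
    rw [Real.dist_eq, Real.dist_eq, Real.coe_toNNReal _ (by positivity),
      show 1 - s / η - (1 - t / η) = (t - s) / η by ring, abs_div, abs_of_nonneg hη,
      abs_sub_comm, div_eq_mul_one_div, mul_comm]
  have h := hφ.comp (lipschitz_infDist_pt A)
  rw [mul_one] at h
  exact h

lemma isClosed_transitionLayer (hA : IsOpen A) : IsClosed (transitionLayer A η) :=
  hA.isClosed_compl.inter (isClosed_le (continuous_infDist_pt A) continuous_const)

lemma norm_one_sub_indicator_mul_distProfile_pow_le_indicator (hη : 0 < η) {k : ℕ}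
    (hk : k ≠ 0) :
    ‖(1 - A.indicator (fun _ => (1 : ℝ)) x) * distProfile A η x ^ k‖ ≤
      (transitionLayer A η).indicator (fun _ => 1) x := by
  by_cases hxA : x ∈ A
  · simpa [hxA] using indicator_nonneg (fun _ _ => zero_le_one) x
  by_cases hx : x ∈ transitionLayer A η
  · rw [indicator_of_notMem hxA, indicator_of_mem hx, sub_zero, one_mul, Real.norm_eq_abs,
      abs_of_nonneg (pow_nonneg distProfile_nonneg k)]
    exact pow_le_one₀ distProfile_nonneg (distProfile_le_one hη.le)
  · simp [distProfile_eq_zero_of_notMem_transitionLayer hη hxA hx, hx, hk]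

end Profile

section Derivative

variable {A : Set ℝ} {η : ℝ} {x : ℝ}

lemma deriv_distProfile_eq_zero (hA : IsOpen A) (hη : 0 < η)
    (hx : x ∉ transitionLayer A η) : deriv (distProfile A η) x = 0 := by
  suffices ∃ c, distProfile A η =ᶠ[𝓝 x] fun _ => c by
    obtain ⟨c, hc⟩ := this
    rw [hc.deriv_eq, deriv_const]
  by_cases hxA : x ∈ A
  · exact ⟨1, eventually_of_mem (hA.mem_nhds hxA) fun y => distProfile_eq_one_of_mem⟩
  · have hfar : η < infDist x A := not_le.1 fun h => hx ⟨hxA, h⟩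
    exact ⟨0, eventually_of_mem
      ((isOpen_lt continuous_const (continuous_infDist_pt A)).mem_nhds hfar)
      fun y hy => distProfile_eq_zero_of_le_infDist hη (le_of_lt hy)⟩

lemma norm_deriv_distProfile_sq_le_indicator (hA : IsOpen A) (hη : 0 < η) :
    ‖deriv (distProfile A η) x ^ 2‖ ≤
      (transitionLayer A η).indicator (fun _ => (1 / η) ^ 2) x := by
  by_cases hx : x ∈ transitionLayer A η
  · have hderiv :=
      norm_deriv_le_of_lipschitz (x₀ := x) (lipschitzWith_distProfile (A := A) hη.le)
    rw [Real.coe_toNNReal _ (by positivity)] at hderiv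
    rw [indicator_of_mem hx, norm_pow]
    gcongr
  · simp [deriv_distProfile_eq_zero hA hη hx, hx]

end Derivative

lemma transitionLayer_iUnion_Ioo_subset {ι : Type*} [Finite ι] {a b : ι → ℝ} {η : ℝ}
    (hne : (⋃ i, Ioo (a i) (b i)).Nonempty) :
    transitionLayer (⋃ i, Ioo (a i) (b i)) η ⊆
      ⋃ i, Icc (a i - η) (a i) ∪ Icc (b i) (b i + η) := by
  rintro x ⟨hxA, hxη⟩
  obtain ⟨y, hy, hxy⟩ := exists_mem_closure_infDist_eq_dist hne x
  rw [closure_iUnion_of_finite, mem_iUnion] at hy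
  obtain ⟨i, hyi⟩ := hy
  have hyi : y ∈ Icc (a i) (b i) := closure_minimal Ioo_subset_Icc_self isClosed_Icc hyi
  have hxy : |x - y| ≤ η := by rw [← Real.dist_eq, ← hxy]; exact hxη
  have hxi : x ∉ Ioo (a i) (b i) := fun h => hxA (mem_iUnion_of_mem i h)
  rw [mem_Ioo, not_and_or, not_lt, not_lt] at hxi
  refine mem_iUnion_of_mem i ?_
  rcases hxi with hxa | hxb
  · exact Or.inl ⟨by linarith [abs_le.1 hxy, hyi.1], hxa⟩
  · exact Or.inr ⟨hxb, by linarith [abs_le.1 hxy, hyi.2]⟩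

lemma volume_iUnion_Icc_endpoints_le {ι : Type*} [Fintype ι] (a b : ι → ℝ) {η : ℝ}
    (hη : 0 ≤ η) :
    volume (⋃ i, Icc (a i - η) (a i) ∪ Icc (b i) (b i + η)) ≤
      ENNReal.ofReal (2 * Fintype.card ι * η) := by
  calc volume (⋃ i, Icc (a i - η) (a i) ∪ Icc (b i) (b i + η))
      ≤ ∑ i, volume (Icc (a i - η) (a i) ∪ Icc (b i) (b i + η)) :=
        measure_iUnion_fintype_le _ _
    _ ≤ ∑ _i : ι, ENNReal.ofReal (2 * η) := by
      refine Finset.sum_le_sum fun i _ => (measure_union_le _ _).trans_eq ?_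
      rw [Real.volume_Icc, Real.volume_Icc, ← ENNReal.ofReal_add] <;> ring_nf <;> linarith
    _ = ENNReal.ofReal (2 * Fintype.card ι * η) := by
      rw [Finset.sum_const, Finset.card_univ, nsmul_eq_mul, ← ENNReal.ofReal_natCast,
        ← ENNReal.ofReal_mul (Nat.cast_nonneg _)]
      ring_nf

lemma setIntegral_le_mul_measureReal_of_norm_le_indicator {X : Type*} [MeasurableSpace X]
    {μ : Measure X} {f : X → ℝ} {s S : Set X} {M : ℝ} (hS : MeasurableSet S)
    (hSμ : μ S ≠ ⊤) (hf : AEStronglyMeasurable f μ) (hfS : ∀ x, ‖f x‖ ≤ S.indicator (fun _ => M) x) :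
    ∫ x in s, f x ∂μ ≤ M * μ.real S := by
  have hg : Integrable (S.indicator fun _ => M) μ :=
    (integrable_indicator_iff hS).2 (integrableOn_const hSμ)
  have hfi : Integrable f μ := hg.mono' hf (Eventually.of_forall hfS)
  calc ∫ x in s, f x ∂μ ≤ ∫ x in s, S.indicator (fun _ => M) x ∂μ :=
        setIntegral_mono hfi.integrableOn hg.integrableOn
          fun x => (Real.le_norm_self _).trans (hfS x)
    _ ≤ ∫ x, S.indicator (fun _ => M) x ∂μ :=
        setIntegral_le_integral hg (Eventually.of_forall fun x => (norm_nonneg _).trans (hfS x))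
    _ = M * μ.real S := by rw [integral_indicator_const _ hS, smul_eq_mul, mul_comm]

/-- The test-function construction of Proposition 1 (Pr:1D): for
`A = ⋃ᵢ (aᵢ, bᵢ)` a finite union of `n` disjoint intervals in `[0,1]` and
`η ∈ (0,1]`, there is a `1/η`-Lipschitz profile `u` equal to `1` on `A`,
vanishing at distance `≥ η` from `A`, with `∫₀¹ (u')² ≤ Cn/η` and
`∫₀¹ (1-𝟙_A)u³ ≤ Cnη`. -/
theorem profile_construction_1D :
    ∃ C > (0:ℝ),
      ∀ (n : ℕ), 1 ≤ n →
      ∀ (a b : Fin n → ℝ),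
        (∀ i, 0 ≤ a i) → (∀ i, a i < b i) → (∀ i, b i ≤ 1) →
        (∀ i j, i < j → b i < a j) →
        ∀ (η : ℝ), 0 < η → η ≤ 1 →
          ∃ u : ℝ → ℝ,
            LipschitzWith (Real.toNNReal (1 / η)) u ∧
            (∀ x, 0 ≤ u x ∧ u x ≤ 1) ∧
            (∀ x ∈ ⋃ i, Set.Ioo (a i) (b i), u x = 1) ∧
            (∀ x : ℝ, η ≤ Metric.infDist x (⋃ i, Set.Ioo (a i) (b i)) → u x = 0) ∧
            (∫ x in (0:ℝ)..1, (deriv u x) ^ 2) ≤ C * n / η ∧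
            (∫ x in (0:ℝ)..1,
                (1 - (⋃ i, Set.Ioo (a i) (b i)).indicator (fun _ => (1:ℝ)) x) * u x ^ 3)
              ≤ C * n * η := by
  refine ⟨2, two_pos, fun n hn a b _ hab _ _ η hη _ => ?_⟩
  set A := ⋃ i, Ioo (a i) (b i)
  have hA : IsOpen A := isOpen_iUnion fun _ => isOpen_Ioo
  have hne : A.Nonempty :=
    (nonempty_Ioo.2 (hab ⟨0, hn⟩)).mono (subset_iUnion_of_subset _ le_rfl)
  have hL : volume (transitionLayer A η) ≤ ENNReal.ofReal (2 * n * η) := by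
    simpa using (measure_mono (transitionLayer_iUnion_Ioo_subset hne)).trans
      (volume_iUnion_Icc_endpoints_le a b hη.le)
  have hLreal : volume.real (transitionLayer A η) ≤ 2 * n * η :=
    ENNReal.toReal_le_of_le_ofReal (by positivity) hL
  have hLfin : volume (transitionLayer A η) ≠ ⊤ := ne_top_of_le_ne_top ENNReal.ofReal_ne_top hL
  have hLmeas := (isClosed_transitionLayer (η := η) hA).measurableSet
  have hlip := lipschitzWith_distProfile (A := A) hη.le
  refine ⟨distProfile A η, hlip, fun x => ⟨distProfile_nonneg, distProfile_le_one hη.le⟩,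
    fun x => distProfile_eq_one_of_mem, fun x => distProfile_eq_zero_of_le_infDist hη, ?_, ?_⟩
  · rw [integral_of_le zero_le_one]
    calc _ ≤ (1 / η) ^ 2 * volume.real (transitionLayer A η) :=
          setIntegral_le_mul_measureReal_of_norm_le_indicator hLmeas hLfin
            ((measurable_deriv _).pow_const 2).aestronglyMeasurable
            fun x => norm_deriv_distProfile_sq_le_indicator hA hη
      _ ≤ (1 / η) ^ 2 * (2 * n * η) := by gcongr
      _ = 2 * n / η := by field_simp
  · rw [integral_of_le zero_le_one]
    calc _ ≤ 1 * volume.real (transitionLayer A η) :=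
          setIntegral_le_mul_measureReal_of_norm_le_indicator hLmeas hLfin
            ((measurable_const.sub (measurable_const.indicator hA.measurableSet)).mul
              (hlip.continuous.measurable.pow_const 3)).aestronglyMeasurable
            fun x => norm_one_sub_indicator_mul_distProfile_pow_le_indicator hη three_ne_zero
      _ ≤ 2 * n * η := by linarith
end
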